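/- arXiv:1304.7719 — 2 statements merged into one kernel-verified Lean document; each statement's English description precedes it below -/
import Mathlib

section
/- Let S be a closed set of pairs and define ρ_S : SL_n(ℂ) → ⨁_{j=1}^n Λ^{|S_j|}ℂ^n by ρ_S(A) := ⨁_{j=1}^n ⋀_{i∈S_j}(A e_i) (the wedges of the columns of A indexed by S_j). Then: (i) ρ_S(Au) = ρ_S(A) for all A ∈ SL_n(ℂ) and u ∈ U_S; (ii) if A, B ∈ SL_n(ℂ) satisfy ρ_S(A) = ρ_S(B), then A⁻¹B ∈ U_S (so ρ_S is injective on right U_S-cosets); (iii) ρ_S(gA) = g·ρ_S(A) for all g, A ∈ SL_n(ℂ), where g acts on ⨁_{j=1}^n Λ^{|S_j|}ℂ^n componentwise by exterior powers of its standard action. -/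
open Matrix Filter Topology

noncomputable section

/-- A finite set `S` of pairs `(i,j)` of indices with `i < j` is *closed* if
`(i,j) ∈ S` and `(j,k) ∈ S` imply `(i,k) ∈ S`. -/
def PairsClosed {n : ℕ} (S : Finset (Fin n × Fin n)) : Prop :=
  (∀ p ∈ S, p.1 < p.2) ∧ ∀ i j k : Fin n, (i, j) ∈ S → (j, k) ∈ S → (i, k) ∈ S

/-- The subgroup `U_S` of `SL_n(ℂ)`, as a set: matrices that are upper triangular,
with ones on the diagonal, and vanishing at each entry `(i,j)` with `i < j` and
`(i,j) ∉ S`. -/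
def USet {n : ℕ} (S : Finset (Fin n × Fin n)) :
    Set (Matrix.SpecialLinearGroup (Fin n) ℂ) :=
  {u | (∀ i j : Fin n, j < i → u.val i j = 0) ∧ (∀ i : Fin n, u.val i i = 1) ∧
       ∀ i j : Fin n, i < j → (i, j) ∉ S → u.val i j = 0}

/-- `S_j = {j} ∪ {i : (i,j) ∈ S}`. -/
def colS {n : ℕ} (S : Finset (Fin n × Fin n)) (j : Fin n) : Finset (Fin n) :=
  insert j ((S.filter (fun p => p.2 = j)).image Prod.fst)

/-- The index set of the standard basis of `Λ^k ℂ^n`: subsets of `{1,…,n}` of size `k`. -/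
abbrev SubK (n k : ℕ) := {C : Finset (Fin n) // C.card = k}

/-- The increasing enumeration of a size-`k` subset of `{1,…,n}`. -/
def enumK {n k : ℕ} (C : SubK n k) (a : Fin k) : Fin n :=
  (C.1.orderIsoOfFin C.2 a : Fin n)

/-- The `k`-th exterior power `Λ^k ℂ^n`, in the coordinates given by its standard basis
`⋀_{i∈C} e_i`, `C ⊆ {1,…,n}`, `|C| = k`. -/
abbrev ExtP (n k : ℕ) := SubK n k → ℂ

/-- The standard basis vector `e_i` of `ℂ^n`. -/
def stdVec {n : ℕ} (i : Fin n) : Fin n → ℂ := Pi.single i 1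

/-- The wedge `v_1 ∧ … ∧ v_k ∈ Λ^k ℂ^n` of a family of vectors, in standard coordinates:
its coordinate along the basis vector `⋀_{i∈C} e_i` is the determinant of the `k×k`
matrix of the `C`-coordinates of `v_1,…,v_k`. -/
def wedgeFam {n : ℕ} (k : ℕ) (v : Fin k → (Fin n → ℂ)) : ExtP n k :=
  fun C => Matrix.det (Matrix.of fun a b : Fin k => v b (enumK C a))

/-- `⋀_{i∈C} e_i`, the wedge of the standard basis vectors indexed by `C`, taken in
increasing order of indices. -/
def wedgeBasis {n : ℕ} (k : ℕ) (C : Finset (Fin n)) (h : C.card = k) : ExtP n k :=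
  wedgeFam k (fun a => stdVec (C.orderIsoOfFin h a))

/-- `⋀_{i∈D} (g e_i)`, the wedge of the columns of `g` indexed by `D`, taken in
increasing order of indices. -/
def colWedge {n : ℕ} (k : ℕ) (g : Matrix (Fin n) (Fin n) ℂ) (D : Finset (Fin n))
    (h : D.card = k) : ExtP n k :=
  wedgeFam k (fun a => g.mulVec (stdVec (D.orderIsoOfFin h a)))

/-- The minor of `g` with rows `C` and columns `D` (both of size `k`, in increasing
order of indices). -/
def gminor {n : ℕ} (k : ℕ) (g : Matrix (Fin n) (Fin n) ℂ) (C D : SubK n k) : ℂ :=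
  Matrix.det (Matrix.of fun a b : Fin k => g (enumK C a) (enumK D b))

/-- The action of `g` on `Λ^k ℂ^n` (the `k`-th exterior power of the standard action of
`g` on `ℂ^n`), in standard coordinates: the matrix of `Λ^k g` in the standard basis is
the `k`-th compound matrix of `g`, whose entries are the `k×k` minors of `g`. -/
def extAct {n : ℕ} (k : ℕ) (g : Matrix (Fin n) (Fin n) ℂ) (x : ExtP n k) : ExtP n k :=
  fun C => ∑ D : SubK n k, gminor k g C D * x D

/-- The map `ρ_S : SL_n(ℂ) → ⨁_{j=1}^n Λ^{|S_j|} ℂ^n`,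
`A ↦ ⨁_{j=1}^n ⋀_{i∈S_j}(A e_i)` (the wedges of the columns of `A` indexed by `S_j`). -/
def rhoS {n : ℕ} (S : Finset (Fin n × Fin n))
    (A : Matrix.SpecialLinearGroup (Fin n) ℂ) :
    (j : Fin n) → ExtP n (colS S j).card :=
  fun j => colWedge (colS S j).card A.val (colS S j) rfl

/-! The minors of a product are computed by Cauchy–Binet, which here is the functoriality of
`⋀^k` read off in the standard basis of `⋀^k ℂ^n`; this is the equivariance (iii). The
heart of the matter is that `ρ_S(u) = ρ_S(1)` exactly when `u ∈ U_S`. If `u ∈ U_S`, closedness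
of `S` makes the columns `S_j` of `u` vanish outside the rows `S_j`, and the `S_j × S_j` block is
unitriangular. Conversely, if the minors of `u` on the columns `S_j` are those of the identity,
Cramer's rule for the `S_j × S_j` block (of determinant `1`) shows that the rows outside `S_j`
vanish on these columns, and the unit diagonal follows by induction on `j`. Then
`ρ_S(Au) = A·ρ_S(u) = A·ρ_S(1) = ρ_S(A)` and `ρ_S(A⁻¹B) = A⁻¹·ρ_S(B) = A⁻¹·ρ_S(A) = ρ_S(1)`. -/

theorem Function.Injective.update_of_notMem_range {α β : Type*} [DecidableEq α] {f : α → β}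
    (hf : Function.Injective f) (a : α) {b : β} (hb : b ∉ Set.range f) :
    Function.Injective (Function.update f a b) := by
  intro x y hxy
  by_cases hx : x = a <;> by_cases hy : y = a
  · exact hx.trans hy.symm
  · rw [hx, Function.update_self, Function.update_of_ne hy] at hxy
    exact absurd ⟨y, hxy.symm⟩ hb
  · rw [hy, Function.update_self, Function.update_of_ne hx] at hxy
    exact absurd ⟨x, hxy⟩ hb
  · rw [Function.update_of_ne hx, Function.update_of_ne hy] at hxy
    exact hf hxy

section minors

variable {n k : ℕ}

theorem enumK_strictMono (C : SubK n k) : StrictMono (enumK C) :=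
  fun _ _ h => (C.1.orderIsoOfFin C.2).strictMono h

theorem enumK_mem (C : SubK n k) (a : Fin k) : enumK C a ∈ C.1 :=
  (C.1.orderIsoOfFin C.2 a).2

theorem exists_enumK_eq (C : SubK n k) {x : Fin n} (hx : x ∈ C.1) : ∃ a, enumK C a = x :=
  ⟨(C.1.orderIsoOfFin C.2).symm ⟨x, hx⟩, by simp [enumK]⟩

theorem SubK.exists_mem_notMem_of_ne {C D : SubK n k} (h : C ≠ D) : ∃ r ∈ C.1, r ∉ D.1 := by
  by_contra! hCD
  exact h (Subtype.ext (Finset.eq_of_subset_of_card_le hCD (by rw [C.2, D.2])))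

theorem exists_perm_eq_enumK_comp {ρ : Fin k → Fin n} (hρ : Function.Injective ρ) :
    ∃ σ : Equiv.Perm (Fin k), ρ = enumK ⟨Finset.univ.image ρ,
      (Finset.card_image_of_injective _ hρ).trans (Finset.card_fin k)⟩ ∘ σ := by
  set E : SubK n k :=
    ⟨Finset.univ.image ρ, (Finset.card_image_of_injective _ hρ).trans (Finset.card_fin k)⟩
  let σ : Fin k → Fin k := fun a =>
    (E.1.orderIsoOfFin E.2).symm ⟨ρ a, Finset.mem_image_of_mem ρ (Finset.mem_univ a)⟩
  have hσ : ∀ a, enumK E (σ a) = ρ a := fun a => by simp [σ, enumK]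
  have hσinj : Function.Injective σ := fun a b hab => hρ (by rw [← hσ a, ← hσ b, hab])
  exact ⟨Equiv.ofBijective σ (Finite.injective_iff_bijective.1 hσinj), funext fun a => (hσ a).symm⟩

theorem gminor_eq_zero_of_row {g : Matrix (Fin n) (Fin n) ℂ} {C D : SubK n k} {r : Fin n}
    (hr : r ∈ C.1) (h : ∀ i ∈ D.1, g r i = 0) : gminor k g C D = 0 := by
  obtain ⟨a, rfl⟩ := exists_enumK_eq C hr
  exact Matrix.det_eq_zero_of_row_eq_zero a fun b => h _ (enumK_mem D b)

theorem gminor_self_of_triangular {g : Matrix (Fin n) (Fin n) ℂ} {D : SubK n k}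
    (h : ∀ i ∈ D.1, ∀ j ∈ D.1, j < i → g i j = 0) : gminor k g D D = ∏ i ∈ D.1, g i i := by
  have htri : (Matrix.of fun a b => g (enumK D a) (enumK D b)).IsUpperTriangular :=
    fun a b hab => h _ (enumK_mem D a) _ (enumK_mem D b) (enumK_strictMono D hab)
  rw [gminor, Matrix.det_of_isUpperTriangular htri]
  exact (Fintype.prod_equiv (D.1.orderIsoOfFin D.2).toEquiv _ (fun i : D.1 => g i i)
    fun _ => rfl).trans (D.1.prod_coe_sort fun i => g i i)

theorem gminor_one (C D : SubK n k) :
    gminor k (1 : Matrix (Fin n) (Fin n) ℂ) C D = if C = D then 1 else 0 := by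
  split_ifs with h
  · subst h
    rw [gminor_self_of_triangular fun i _ j _ hji => Matrix.one_apply_ne hji.ne']
    exact Finset.prod_eq_one fun i _ => Matrix.one_apply_eq i
  · obtain ⟨r, hrC, hrD⟩ := SubK.exists_mem_notMem_of_ne h
    exact gminor_eq_zero_of_row hrC fun i hi =>
      Matrix.one_apply_ne (ne_of_mem_of_not_mem hi hrD).symm

theorem apply_eq_zero_of_gminor_eq_ite {u : Matrix (Fin n) (Fin n) ℂ} {D : SubK n k}
    (h : ∀ C, gminor k u C D = if C = D then 1 else 0) {r i : Fin n} (hr : r ∉ D.1)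
    (hi : i ∈ D.1) : u r i = 0 := by
  set N : Matrix (Fin k) (Fin k) ℂ := Matrix.of fun a b => u (enumK D a) (enumK D b)
  set m : Fin k → ℂ := fun b => u r (enumK D b)
  have hN : N.det = 1 := (h D).trans (if_pos rfl)
  -- Replacing a row of `N` by `m` gives, up to sign, a minor with a row set other than `D`.
  have hrow : ∀ a, (N.updateRow a m).det = 0 := by
    intro a
    have hρ := (enumK_strictMono D).injective.update_of_notMem_range a
      (b := r) fun ⟨b, hb⟩ => hr (hb ▸ enumK_mem D b)
    obtain ⟨σ, hσ⟩ := exists_perm_eq_enumK_comp hρ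
    set E : SubK n k := ⟨Finset.univ.image (Function.update (enumK D) a r), _⟩
    have hE : E ≠ D := fun hED => hr (hED ▸ Finset.mem_image.2 ⟨a, Finset.mem_univ a, by simp⟩)
    have hsub : N.updateRow a m =
        (Matrix.of fun a b => u (enumK E a) (enumK D b)).submatrix σ id := by
      ext c b
      have hc : enumK E (σ c) = Function.update (enumK D) a r c := (congrFun hσ c).symm
      rw [Matrix.submatrix_apply, Matrix.of_apply, id, hc]
      by_cases hca : c = a
      · subst hca
        simp [m]
      · simp [N, hca]
    rw [hsub, Matrix.det_permute, ← gminor, h, if_neg hE, mul_zero]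
  have hcramer : Nᵀ.cramer m = 0 := funext fun a => by
    rw [Matrix.cramer_apply, Matrix.updateCol_transpose, Matrix.det_transpose, hrow a,
      Pi.zero_apply]
  have hm := Nᵀ.mulVec_cramer m
  rw [hcramer, Matrix.mulVec_zero, Matrix.det_transpose, hN, one_smul] at hm
  obtain ⟨b, rfl⟩ := exists_enumK_eq D hi
  exact (congrFun hm b).symm

def SubK.equivPowersetCard : SubK n k ≃ Set.powersetCard (Fin n) k :=
  Equiv.subtypeEquivRight fun _ => Set.powersetCard.mem_iff.symm

open exteriorPower in
theorem wedgeFam_eq_repr (v : Fin k → Fin n → ℂ) (C : SubK n k) :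
    wedgeFam k v C =
      ((Pi.basisFun ℂ (Fin n)).exteriorPower k).repr (ιMulti ℂ k v) (SubK.equivPowersetCard C) := by
  rw [basis_repr_apply, ιMultiDual_apply_ιMulti, ← Matrix.det_transpose]
  congr 1

theorem wedgeFam_mulVec_stdVec (g : Matrix (Fin n) (Fin n) ℂ) (C D : SubK n k) :
    wedgeFam k (fun a => g *ᵥ stdVec (enumK D a)) C = gminor k g C D := by
  simp [wedgeFam, gminor, stdVec, Matrix.mulVec_single]

open exteriorPower in
theorem wedgeFam_mulVec (g : Matrix (Fin n) (Fin n) ℂ) (v : Fin k → Fin n → ℂ) :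
    wedgeFam k (fun a => g *ᵥ v a) = extAct k g (wedgeFam k v) := by
  set b := (Pi.basisFun ℂ (Fin n)).exteriorPower k
  have hmap : ιMulti ℂ k (fun a => g *ᵥ v a) = map k (Matrix.toLin' g) (ιMulti ℂ k v) := by
    rw [map_apply_ιMulti]; rfl
  have hbasis : ∀ D : SubK n k, map k (Matrix.toLin' g) (b (SubK.equivPowersetCard D)) =
      ιMulti ℂ k (fun a => g *ᵥ stdVec (enumK D a)) := by
    intro D
    rw [basis_apply, map_apply_ιMulti_family, ιMulti_family]
    congr 1
    funext a
    simp [Set.powersetCard.ofFinEmbEquiv_symm_apply, enumK, stdVec, SubK.equivPowersetCard]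
  funext C
  rw [extAct, wedgeFam_eq_repr, hmap, ← b.sum_repr (ιMulti ℂ k v), map_sum, map_sum,
    Finsupp.finsetSum_apply, ← (SubK.equivPowersetCard).sum_comp]
  refine Finset.sum_congr rfl fun D _ => ?_
  rw [map_smul, map_smul, Finsupp.smul_apply, smul_eq_mul, mul_comm, hbasis,
    ← wedgeFam_eq_repr, ← wedgeFam_eq_repr, wedgeFam_mulVec_stdVec]

theorem colWedge_mul (g A : Matrix (Fin n) (Fin n) ℂ) (D : Finset (Fin n)) (h : D.card = k) :
    colWedge k (g * A) D h = extAct k g (colWedge k A D h) := by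
  simp only [colWedge, ← Matrix.mulVec_mulVec]
  exact wedgeFam_mulVec g _

end minors

section closedPairs

variable {n : ℕ} {S : Finset (Fin n × Fin n)}

theorem mem_colS {i j : Fin n} : i ∈ colS S j ↔ i = j ∨ (i, j) ∈ S := by
  simp [colS]

theorem self_mem_colS (j : Fin n) : j ∈ colS S j :=
  mem_colS.2 (Or.inl rfl)

theorem le_of_mem_colS (hS : PairsClosed S) {i j : Fin n} (h : i ∈ colS S j) : i ≤ j := by
  rcases mem_colS.1 h with rfl | h
  · exact le_rfl
  · exact (hS.1 _ h).le

theorem rhoS_apply (A : Matrix.SpecialLinearGroup (Fin n) ℂ) (j : Fin n)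
    (C : SubK n (colS S j).card) : rhoS S A j C = gminor _ A.val C ⟨colS S j, rfl⟩ :=
  wedgeFam_mulVec_stdVec A.val C ⟨colS S j, rfl⟩

theorem rhoS_mul (g A : Matrix.SpecialLinearGroup (Fin n) ℂ) :
    rhoS S (g * A) = fun j => extAct (colS S j).card g.val (rhoS S A j) :=
  funext fun _ => colWedge_mul g.val A.val _ rfl

theorem apply_eq_zero_of_mem_USet (hS : PairsClosed S) {u : Matrix.SpecialLinearGroup (Fin n) ℂ}
    (hu : u ∈ USet S) {i j r : Fin n} (hi : i ∈ colS S j) (hr : r ∉ colS S j) :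
    u.val r i = 0 := by
  rcases lt_trichotomy r i with h | rfl | h
  · refine hu.2.2 r i h fun hri => hr (mem_colS.2 (Or.inr ?_))
    rcases mem_colS.1 hi with rfl | hij
    · exact hri
    · exact hS.2 r i j hri hij
  · exact absurd hi hr
  · exact hu.1 r i h

theorem mem_USet_of_gminor_colS_eq_ite (hS : PairsClosed S)
    {u : Matrix.SpecialLinearGroup (Fin n) ℂ}
    (h : ∀ j (C : SubK n (colS S j).card),
      gminor _ u.val C ⟨colS S j, rfl⟩ = if C = ⟨colS S j, rfl⟩ then 1 else 0) :
    u ∈ USet S := by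
  have hsupp : ∀ {i j r : Fin n}, i ∈ colS S j → r ∉ colS S j → u.val r i = 0 :=
    fun hi hr => apply_eq_zero_of_gminor_eq_ite (h _) hr hi
  have hnot : ∀ {i j : Fin n}, j < i → i ∉ colS S j :=
    fun hji hi => (le_of_mem_colS hS hi).not_gt hji
  refine ⟨fun i j hji => hsupp (self_mem_colS j) (hnot hji), fun i => ?_,
    fun i j hij hij' => hsupp (self_mem_colS j) fun hi => ?_⟩
  · induction i using WellFoundedLT.induction with
    | _ j ih =>
      have hdet := h j ⟨colS S j, rfl⟩
      rw [if_pos rfl, gminor_self_of_triangular fun a _ b _ hba =>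
          hsupp (self_mem_colS b) (hnot hba),
        ← Finset.mul_prod_erase _ _ (self_mem_colS j)] at hdet
      rwa [Finset.prod_eq_one fun i hi => ih i (lt_of_le_of_ne
        (le_of_mem_colS hS (Finset.mem_of_mem_erase hi)) (Finset.ne_of_mem_erase hi)),
        mul_one] at hdet
  · rcases mem_colS.1 hi with rfl | hi
    · exact hij.false
    · exact hij' hi

theorem gminor_colS_eq_ite_of_mem_USet (hS : PairsClosed S)
    {u : Matrix.SpecialLinearGroup (Fin n) ℂ} (hu : u ∈ USet S) (j : Fin n)
    (C : SubK n (colS S j).card) :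
    gminor _ u.val C ⟨colS S j, rfl⟩ = if C = ⟨colS S j, rfl⟩ then 1 else 0 := by
  split_ifs with hC
  · subst hC
    rw [gminor_self_of_triangular fun i _ j _ hji => hu.1 i j hji]
    exact Finset.prod_eq_one fun i _ => hu.2.1 i
  · obtain ⟨r, hrC, hrD⟩ := SubK.exists_mem_notMem_of_ne hC
    exact gminor_eq_zero_of_row hrC fun i hi => apply_eq_zero_of_mem_USet hS hu hi hrD

theorem rhoS_eq_rhoS_one_iff (hS : PairsClosed S) (u : Matrix.SpecialLinearGroup (Fin n) ℂ) :
    rhoS S u = rhoS S 1 ↔ u ∈ USet S := by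
  simp only [funext_iff, rhoS_apply, Matrix.SpecialLinearGroup.coe_one, gminor_one]
  exact ⟨mem_USet_of_gminor_colS_eq_ite hS, gminor_colS_eq_ite_of_mem_USet hS⟩

end closedPairs

theorem stmt1_general {n : ℕ} (S : Finset (Fin n × Fin n)) (hS : PairsClosed S) :
    (∀ (A : Matrix.SpecialLinearGroup (Fin n) ℂ)
        (u : Matrix.SpecialLinearGroup (Fin n) ℂ), u ∈ USet S →
        rhoS S (A * u) = rhoS S A) ∧
    (∀ A B : Matrix.SpecialLinearGroup (Fin n) ℂ,
        rhoS S A = rhoS S B → A⁻¹ * B ∈ USet S) ∧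
    (∀ g A : Matrix.SpecialLinearGroup (Fin n) ℂ,
        rhoS S (g * A) = fun j => extAct (colS S j).card g.val (rhoS S A j)) := by
  refine ⟨fun A u hu => ?_, fun A B hAB => ?_, rhoS_mul⟩
  · rw [rhoS_mul, (rhoS_eq_rhoS_one_iff hS u).2 hu, ← rhoS_mul, mul_one]
  · rw [← rhoS_eq_rhoS_one_iff hS, rhoS_mul, ← hAB, ← rhoS_mul, inv_mul_cancel]

/-- `ρ_S` is invariant under right multiplication by `U_S`, injective
on right `U_S`-cosets, and `SL_n(ℂ)`-equivariant for the left multiplication action. -/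
theorem stmt1 {n : ℕ} (hn : 1 ≤ n) (S : Finset (Fin n × Fin n)) (hS : PairsClosed S) :
    (∀ (A : Matrix.SpecialLinearGroup (Fin n) ℂ)
        (u : Matrix.SpecialLinearGroup (Fin n) ℂ), u ∈ USet S →
        rhoS S (A * u) = rhoS S A) ∧
    (∀ A B : Matrix.SpecialLinearGroup (Fin n) ℂ,
        rhoS S A = rhoS S B → A⁻¹ * B ∈ USet S) ∧
    (∀ g A : Matrix.SpecialLinearGroup (Fin n) ℂ,
        rhoS S (g * A) = fun j => extAct (colS S j).card g.val (rhoS S A j)) :=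
  stmt1_general S hS

end
end

section
/- Let S be a closed set of pairs and let α = (α_1,…,α_n) ∈ (ℤ_{>0})^n satisfy α_i > 2iα_{i−1} + 2 for i = 2,…,n. Let (b^{(m)})_{m∈ℕ} be a sequence of upper triangular matrices in SL_n(ℂ) with b^{(m)}_{ij} = 0 for all pairs i ≠ j with i ∈ S_j. Assume: (a) for each i ∈ {1,…,n}, the sequence m ↦ b^{(m)}_{11}·b^{(m)}_{22}⋯b^{(m)}_{ii} converges in ℂ; (b) there exists s ∈ {1,…,n} with lim_{m→∞} b^{(m)}_{ss} = 0; (c) setting 𝒞_m := (b^{(m)}_{11})^n (b^{(m)}_{22})^{n−1} ⋯ (b^{(m)}_{nn})^1, for each j ∈ {1,…,n} the limit q_j^∞ := lim_{m→∞} 𝒞_m^{α_j} · ⋀_{i∈S_j}(b^{(m)} e_i) exists in Λ^{|S_j|}ℂ^n. Then for every t ∈ {1,…,n} with q_t^∞ ≠ 0, the vector q_t^∞ lies in the subspace Λ^{|S_t|}(span_ℂ(e_1,…,e_{t−1})) of Λ^{|S_t|}ℂ^n; equivalently, the coordinate of q_t^∞ on every standard basis wedge ⋀_{i∈C} e_i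 with C ⊆ {1,…,n}, |C| = |S_t|, containing an index ≥ t is zero. -/
open Matrix Filter Topology

noncomputable section

open Finset Asymptotics

/-!
Write `d_i = b_ii` (indices are `0`-based) and `P_i = d_0 ⋯ d_i`. The `P_i` converge, hence are
bounded, and `𝒞 = P_0 ⋯ P_{n-1}`; so `𝒞 = O(d_i)`, `𝒞^i d_i = O(P_i) = O(1)`, and `𝒞 → 0`
because `d_s → 0`.

The coordinates of the convergent sequences `𝒞^{α_j} ⋀_{i ∈ S_j} b e_i`, i.e. `𝒞^{α_j}` times the
minors of `b` with columns `S_j`, are bounded. For `i ∉ S_j`, the minor with rows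
`(S_j ∖ {j}) ∪ {i}` has the single nonzero entry `b_ij` in column `j`, and the complementary minor
is triangular, so it equals `± b_ij ∏_{k ∈ S_j ∖ {j}} d_k`. As `𝒞 = O(d_k)`, this gives
`𝒞^{α_j + j} b_ij = O(1)` for every entry.

Finally let `D` contain some `r ≥ t`. In the minor with rows `D` and columns `S_t`, row `r` has
the single nonzero entry `b_rt`, and expanding the complementary minor over permutations with the
entry bounds shows that it is `O(𝒞^{-N})`, `N = ∑_{e ∈ S_t ∖ {t}} (α_e + e)`. Since
`𝒞^t b_rt = O(1)` and the growth condition on `α` gives `N + t < α_t`, `𝒞^{α_t}` times the minor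
is `O(𝒞)` and tends to `0`.
-/

theorem Finset.orderEmbOfFin_succAbove {α : Type*} [LinearOrder α] {s : Finset α} {k : ℕ}
    (h : s.card = k + 1) (x : Fin (k + 1)) :
    (fun a => s.orderEmbOfFin h (x.succAbove a)) =
      (s.erase (s.orderEmbOfFin h x)).orderEmbOfFin
        (by rw [card_erase_of_mem (orderEmbOfFin_mem s h x), h, Nat.add_sub_cancel]) :=
  orderEmbOfFin_unique _
    (fun a => mem_erase.2 ⟨fun he => Fin.succAbove_ne x a ((s.orderEmbOfFin h).injective he),
      orderEmbOfFin_mem s h _⟩)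
    ((s.orderEmbOfFin h).strictMono.comp (Fin.strictMono_succAbove x))

section Minors

variable {n k : ℕ}

theorem enumK_eq_orderEmbOfFin (C : SubK n k) : enumK C = C.1.orderEmbOfFin C.2 := by
  funext a
  simp [enumK, coe_orderIsoOfFin_apply]

theorem gminor_eq_det_submatrix (g : Matrix (Fin n) (Fin n) ℂ) (C D : SubK n k) :
    gminor k g C D = (g.submatrix (C.1.orderEmbOfFin C.2) (D.1.orderEmbOfFin D.2)).det := by
  simp only [gminor, enumK_eq_orderEmbOfFin]
  rfl

theorem colWedge_apply (g : Matrix (Fin n) (Fin n) ℂ) (D : Finset (Fin n)) (h : D.card = k)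
    (C : SubK n k) : colWedge k g D h C = gminor k g C ⟨D, h⟩ := by
  simp [colWedge, wedgeFam, gminor, stdVec, enumK]

theorem gminor_transpose (g : Matrix (Fin n) (Fin n) ℂ) (C D : SubK n k) :
    gminor k gᵀ C D = gminor k g D C := by
  rw [gminor, ← det_transpose]
  rfl

theorem gminor_self_of_isUpperTriangular {g : Matrix (Fin n) (Fin n) ℂ}
    (hg : g.IsUpperTriangular) (D : SubK n k) : gminor k g D D = ∏ x ∈ D.1, g x x := by
  set f := D.1.orderEmbOfFin D.2
  have hU : (g.submatrix f f).IsUpperTriangular := fun a b hab => hg (f.strictMono hab)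
  rw [gminor_eq_det_submatrix, det_of_isUpperTriangular hU,
    ← image_orderEmbOfFin_univ D.1 D.2, prod_image (fun a _ b _ hab => f.injective hab)]
  rfl

theorem norm_gminor_of_row (g : Matrix (Fin n) (Fin n) ℂ) (R E : SubK n k) {i j : Fin n}
    (hi : i ∈ R.1) (hj : j ∈ E.1) (hrow : ∀ e ∈ E.1, e ≠ j → g i e = 0) :
    ‖gminor k g R E‖ = ‖g i j‖ *
      ‖gminor (k - 1) g ⟨R.1.erase i, by rw [card_erase_of_mem hi, R.2]⟩
        ⟨E.1.erase j, by rw [card_erase_of_mem hj, E.2]⟩‖ := by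
  obtain ⟨R, hR⟩ := R
  obtain ⟨E, hE⟩ := E
  obtain ⟨k, rfl⟩ : ∃ k', k = k' + 1 :=
    Nat.exists_eq_add_one.2 (hR ▸ card_pos.2 ⟨i, hi⟩)
  obtain ⟨x, rfl⟩ : ∃ x, R.orderEmbOfFin hR x = i := by
    simpa [← Set.mem_range, range_orderEmbOfFin] using hi
  obtain ⟨y, rfl⟩ : ∃ y, E.orderEmbOfFin hE y = j := by
    simpa [← Set.mem_range, range_orderEmbOfFin] using hj
  simp only [gminor_eq_det_submatrix]
  rw [det_succ_row _ x, sum_eq_single y]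
  · simp only [submatrix_submatrix, Function.comp_def, Finset.orderEmbOfFin_succAbove]
    simp
  · intro y' _ hy'
    simp [hrow _ (orderEmbOfFin_mem E hE y') (fun h => hy' ((E.orderEmbOfFin hE).injective h))]
  · simp

theorem norm_gminor_of_col (g : Matrix (Fin n) (Fin n) ℂ) (R E : SubK n k) {i j : Fin n}
    (hi : i ∈ R.1) (hj : j ∈ E.1) (hcol : ∀ r ∈ R.1, r ≠ i → g r j = 0) :
    ‖gminor k g R E‖ = ‖g i j‖ *
      ‖gminor (k - 1) g ⟨R.1.erase i, by rw [card_erase_of_mem hi, R.2]⟩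
        ⟨E.1.erase j, by rw [card_erase_of_mem hj, E.2]⟩‖ := by
  rw [← gminor_transpose, norm_gminor_of_row gᵀ E R hj hi hcol, gminor_transpose,
    transpose_apply]

end Minors

section Asymptotics

variable {ι 𝕜 : Type*} [NormedField 𝕜] {l : Filter ι}

theorem Matrix.prod_mul_det_isBigO_one {κ : Type*} [Fintype κ] [DecidableEq κ]
    (M : ι → Matrix κ κ 𝕜) (w : κ → ι → 𝕜)
    (h : ∀ x y, (fun m => w y m * M m x y) =O[l] (fun _ => (1 : 𝕜))) :
    (fun m => (∏ y, w y m) * (M m).det) =O[l] (fun _ => (1 : 𝕜)) := by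
  have hσ (σ : Equiv.Perm κ) :
      (fun m => ∏ y, w y m * M m (σ y) y) =O[l] (fun _ => (1 : 𝕜)) := by
    simpa using IsBigO.finsetProd (s := univ) fun y _ => h (σ y) y
  refine (IsBigO.fun_sum (s := univ) fun σ _ =>
    (hσ σ).const_mul_left (Equiv.Perm.sign σ : 𝕜)).congr_left fun m => ?_
  simp only [det_apply, mul_sum, Units.smul_def, zsmul_eq_mul, prod_mul_distrib]
  exact sum_congr rfl fun σ _ => by
    rw [Fintype.prod_equiv σ (fun y => M m (σ y) y) (fun y => M m y (σ.symm y)) (by simp)]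
    ring

theorem prod_isBigO_of_isBigO_one {κ : Type*} [Fintype κ] [DecidableEq κ] {f : κ → ι → 𝕜}
    (hf : ∀ j, f j =O[l] (fun _ => (1 : 𝕜))) (i : κ) : (fun m => ∏ j, f j m) =O[l] f i := by
  have h := (isBigO_refl (f i) l).mul (IsBigO.finsetProd (s := univ.erase i) fun j _ => hf j)
  simp only [prod_const_one, mul_one] at h
  exact h.congr_left fun m => mul_prod_erase univ (f · m) (mem_univ i)

theorem prod_mul_gminor_isBigO_one {n k : ℕ}
    (g : ι → Matrix (Fin n) (Fin n) ℂ) (w : Fin n → ι → ℂ) (R E : SubK n k)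
    (h : ∀ r ∈ R.1, ∀ e ∈ E.1, (fun m => w e m * g m r e) =O[l] (fun _ => (1 : ℂ))) :
    (fun m => (∏ e ∈ E.1, w e m) * gminor k (g m) R E) =O[l] (fun _ => (1 : ℂ)) := by
  set f := E.1.orderEmbOfFin E.2
  have hdet := Matrix.prod_mul_det_isBigO_one
    (fun m => (g m).submatrix (R.1.orderEmbOfFin R.2) f) (fun y m => w (f y) m)
    fun x y => h _ (orderEmbOfFin_mem _ _ x) _ (orderEmbOfFin_mem _ _ y)
  refine hdet.congr_left fun m => ?_
  have hprod : ∏ e ∈ E.1, w e m = ∏ y, w (f y) m := by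
    rw [← image_orderEmbOfFin_univ E.1 E.2, prod_image fun a _ b _ hab => f.injective hab]
  rw [gminor_eq_det_submatrix, hprod]

end Asymptotics

theorem prod_pow_sub_val_eq_prod_prod_Iic {M : Type*} [CommMonoid M] {n : ℕ} (f : Fin n → M) :
    ∏ i, f i ^ (n - i) = ∏ j, ∏ k ∈ Iic j, f k := by
  rw [prod_comm' (t' := univ) (s' := Ici) (by simp)]
  simp [Fin.card_Ici]

section Diagonal

variable {ι : Type*} {l : Filter ι} {n : ℕ} {d : ι → Fin n → ℂ} {C : ι → ℂ}

theorem prod_Iio_isBigO_one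
    (hP : ∀ i, (fun m => ∏ k ∈ Iic i, d m k) =O[l] (fun _ => (1 : ℂ))) (i : Fin n) :
    (fun m => ∏ k ∈ Iio i, d m k) =O[l] (fun _ => (1 : ℂ)) := by
  obtain ⟨_ | j, hi⟩ := i
  · have : Iio (⟨0, hi⟩ : Fin n) = ∅ := by ext x; simp [Fin.lt_def]
    simpa [this] using isBigO_refl (fun _ => (1 : ℂ)) l
  · have : Iio (⟨j + 1, hi⟩ : Fin n) = Iic ⟨j, by omega⟩ := by
      ext x; simp only [mem_Iio, mem_Iic, Fin.lt_def, Fin.le_def]; omega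
    simpa [this] using hP ⟨j, by omega⟩

theorem prod_Iic_isBigO_diag
    (hP : ∀ i, (fun m => ∏ k ∈ Iic i, d m k) =O[l] (fun _ => (1 : ℂ))) (i : Fin n) :
    (fun m => ∏ k ∈ Iic i, d m k) =O[l] (fun m => d m i) := by
  have h := (isBigO_refl (fun m => d m i) l).mul (prod_Iio_isBigO_one hP i)
  simp only [mul_one] at h
  exact h.congr_left fun m => by rw [← Iio_insert, prod_insert notMem_Iio_self]

theorem prod_pow_sub_isBigO_diag
    (hP : ∀ i, (fun m => ∏ k ∈ Iic i, d m k) =O[l] (fun _ => (1 : ℂ)))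
    (hC : ∀ m, C m = ∏ i, d m i ^ (n - i)) (i : Fin n) :
    C =O[l] (fun m => d m i) := by
  have hC' : C = fun m => ∏ j, ∏ k ∈ Iic j, d m k :=
    funext fun m => (hC m).trans (prod_pow_sub_val_eq_prod_prod_Iic _)
  rw [hC']
  exact (prod_isBigO_of_isBigO_one hP i).trans (prod_Iic_isBigO_diag hP i)

theorem prod_pow_sub_pow_mul_diag_isBigO_one
    (hP : ∀ i, (fun m => ∏ k ∈ Iic i, d m k) =O[l] (fun _ => (1 : ℂ)))
    (hC : ∀ m, C m = ∏ i, d m i ^ (n - i)) (i : Fin n) :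
    (fun m => C m ^ (i : ℕ) * d m i) =O[l] (fun _ => (1 : ℂ)) := by
  have hpow : (fun m => C m ^ (i : ℕ)) =O[l] (fun m => ∏ k ∈ Iio i, d m k) := by
    simpa using IsBigO.finsetProd (s := Iio i) fun k _ => prod_pow_sub_isBigO_diag hP hC k
  refine (hpow.mul (isBigO_refl (fun m => d m i) l)).trans ((hP i).congr_left fun m => ?_)
  rw [← Iio_insert, prod_insert notMem_Iio_self, mul_comm]

end Diagonal

section ColumnSets

variable {n : ℕ} {S : Finset (Fin n × Fin n)}

theorem mem_colS_self (S : Finset (Fin n × Fin n)) (j : Fin n) : j ∈ colS S j :=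
  mem_insert_self _ _

theorem lt_of_mem_colS (hS : ∀ p ∈ S, p.1 < p.2) {i j : Fin n} (hi : i ∈ colS S j)
    (hne : i ≠ j) : i < j := by
  simp only [colS, mem_insert, hne, mem_image, mem_filter, false_or] at hi
  obtain ⟨p, ⟨hp, rfl⟩, rfl⟩ := hi
  exact hS p hp

theorem erase_colS_subset_Iio (hS : ∀ p ∈ S, p.1 < p.2) (j : Fin n) :
    (colS S j).erase j ⊆ Iio j := fun _ hi =>
  mem_Iio.2 (lt_of_mem_colS hS (mem_of_mem_erase hi) (ne_of_mem_erase hi))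

theorem card_insert_erase_colS {i j : Fin n} (hi : i ∉ colS S j) :
    (insert i ((colS S j).erase j)).card = (colS S j).card := by
  rw [card_insert_of_notMem (fun h => hi (mem_of_mem_erase h)),
    card_erase_add_one (mem_colS_self S j)]

theorem norm_gminor_insert_erase_colS {g : Matrix (Fin n) (Fin n) ℂ} (hg : g.IsUpperTriangular)
    (hz : ∀ i j, i ∈ colS S j → i ≠ j → g i j = 0) {i j : Fin n} (hi : i ∉ colS S j) :
    ‖gminor _ g ⟨_, card_insert_erase_colS hi⟩ ⟨colS S j, rfl⟩‖ =
      ‖g i j‖ * ∏ x ∈ (colS S j).erase j, ‖g x x‖ := by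
  rw [norm_gminor_of_col g _ _ (mem_insert_self i _) (mem_colS_self S j) fun r hr hri =>
    have hr' := (mem_insert.1 hr).resolve_left hri
    hz r j (mem_of_mem_erase hr') (ne_of_mem_erase hr')]
  have hE : ((colS S j).erase j).card = (colS S j).card - 1 :=
    card_erase_of_mem (mem_colS_self S j)
  rw [← norm_prod, ← gminor_self_of_isUpperTriangular hg ⟨_, hE⟩]
  congr 3
  exact Subtype.ext (erase_insert fun h => hi (mem_of_mem_erase h))

end ColumnSets

theorem sum_Iio_add_val_lt {n : ℕ} {α : Fin n → ℕ} (hαpos : ∀ i, 0 < α i)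
    (hα : ∀ i j : Fin n, (j : ℕ) + 1 = i → 2 * ((i : ℕ) + 1) * α j + 2 < α i) (t : Fin n) :
    ∑ e ∈ Iio t, (α e + e) + t < α t := by
  obtain ⟨t, ht⟩ := t
  induction t with
  | zero =>
    have : Iio (⟨0, ht⟩ : Fin n) = ∅ := by ext x; simp [Fin.lt_def]
    simpa [this] using hαpos _
  | succ t ih =>
    have hIio : Iio (⟨t + 1, ht⟩ : Fin n) = insert ⟨t, by omega⟩ (Iio ⟨t, by omega⟩) := by
      rw [Iio_insert]; ext x; simp only [mem_Iio, mem_Iic, Fin.lt_def, Fin.le_def]; omega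
    have hstep := hα ⟨t + 1, ht⟩ ⟨t, by omega⟩ rfl
    have hpos := hαpos ⟨t, by omega⟩
    have ih := ih (by omega)
    rw [hIio, sum_insert notMem_Iio_self]
    simp only at ih hstep ⊢
    nlinarith

section Bounds

variable {ι : Type*} {l : Filter ι} {n : ℕ} {S : Finset (Fin n × Fin n)} {α : Fin n → ℕ}
  {b : ι → Matrix (Fin n) (Fin n) ℂ} {C : ι → ℂ}

theorem pow_mul_entry_isBigO_one (hS : ∀ p ∈ S, p.1 < p.2) (hut : ∀ m, (b m).IsUpperTriangular)
    (hz : ∀ m i j, i ∈ colS S j → i ≠ j → b m i j = 0) (hC0 : Tendsto C l (𝓝 0))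
    (hCd : ∀ i, C =O[l] (fun m => b m i i))
    (hdiag : ∀ i : Fin n, (fun m => C m ^ (i : ℕ) * b m i i) =O[l] (fun _ => (1 : ℂ)))
    (hminor : ∀ j (R : SubK n (colS S j).card),
      (fun m => C m ^ α j * gminor _ (b m) R ⟨colS S j, rfl⟩) =O[l] (fun _ => (1 : ℂ)))
    (i j : Fin n) : (fun m => C m ^ (α j + j) * b m i j) =O[l] (fun _ => (1 : ℂ)) := by
  by_cases hi : i ∈ colS S j
  · obtain rfl | hne := eq_or_ne i j
    · refine (((hC0.pow (α i)).isBigO_one ℂ).mul (hdiag i)).congr (fun m => ?_) fun _ => mul_one 1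
      ring
    · simpa [hz _ i j hi hne] using isBigO_zero (E' := ℂ) (fun _ => (1 : ℂ)) l
  · set E := (colS S j).erase j
    have hEj : E.card ≤ j := (card_le_card (erase_colS_subset_Iio hS j)).trans (by simp)
    have hprod : (fun m => C m ^ E.card) =O[l] (fun m => ∏ x ∈ E, b m x x) := by
      simpa using IsBigO.finsetProd fun x (_ : x ∈ E) => hCd x
    have hminor' : (fun m => C m ^ α j * (∏ x ∈ E, b m x x) * b m i j) =O[l]
        (fun _ => (1 : ℂ)) := by
      refine (isBigO_of_le l fun m => ?_).trans (hminor j ⟨_, card_insert_erase_colS hi⟩)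
      simp only [norm_mul, norm_gminor_insert_erase_colS (hut m) (hz m) hi, norm_prod]
      exact le_of_eq (by ring)
    have h := ((hC0.pow (j - E.card)).isBigO_one ℂ).mul
      ((((isBigO_refl (fun m => C m ^ α j) l).mul hprod).mul
        (isBigO_refl (fun m => b m i j) l)).trans hminor')
    refine h.congr (fun m => ?_) fun _ => mul_one 1
    rw [← mul_assoc, ← mul_assoc, ← pow_add, ← pow_add]
    congr 2
    omega

theorem pow_mul_gminor_colS_isBigO (hS : ∀ p ∈ S, p.1 < p.2)
    (hut : ∀ m, (b m).IsUpperTriangular) (hC0 : Tendsto C l (𝓝 0))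
    (hdiag : ∀ i : Fin n, (fun m => C m ^ (i : ℕ) * b m i i) =O[l] (fun _ => (1 : ℂ)))
    (hentry : ∀ i j, (fun m => C m ^ (α j + j) * b m i j) =O[l] (fun _ => (1 : ℂ)))
    {t : Fin n} (hαt : ∑ e ∈ Iio t, (α e + e) + t < α t) (D : SubK n (colS S t).card) {r : Fin n}
    (hr : r ∈ D.1) (htr : t ≤ r) :
    (fun m => C m ^ α t * gminor _ (b m) D ⟨colS S t, rfl⟩) =O[l] C := by
  set E := (colS S t).erase t
  set N := ∑ e ∈ E, (α e + e)
  have hN : N + t < α t :=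
    (Nat.add_le_add_right (sum_le_sum_of_subset (erase_colS_subset_Iio hS t)) _).trans_lt hαt
  have hrow (m : ι) := norm_gminor_of_row (b m) D ⟨colS S t, rfl⟩ hr (mem_colS_self S t)
    fun e he hne => hut m ((lt_of_mem_colS hS he hne).trans_le htr)
  have hrt : (fun m => C m ^ (t : ℕ) * b m r t) =O[l] (fun _ => (1 : ℂ)) := by
    rcases htr.eq_or_lt with rfl | hlt
    · exact hdiag t
    · simpa [hut _ hlt] using isBigO_zero (E' := ℂ) (fun _ => (1 : ℂ)) l
  have hminor := prod_mul_gminor_isBigO_one b (fun e m => C m ^ (α e + e))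
    ⟨D.1.erase r, by rw [card_erase_of_mem hr, D.2]⟩ ⟨E, card_erase_of_mem (mem_colS_self S t)⟩
    fun r' _ e _ => hentry r' e
  simp only [prod_pow_eq_pow_sum] at hminor
  have h := ((((hC0.pow (α t - N - t - 1)).isBigO_one ℂ).mul (isBigO_refl C l)).mul hrt).mul hminor
  refine (isBigO_of_le l fun m => ?_).trans (h.congr_right fun m => by ring)
  have hpow : C m ^ α t = C m ^ (α t - N - t - 1) * C m * C m ^ (t : ℕ) * C m ^ N := by
    rw [← pow_succ, ← pow_add, ← pow_add]
    congr 1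
    omega
  rw [norm_mul, hrow, hpow]
  simp only [norm_mul]
  exact le_of_eq (by ring)

end Bounds

theorem stmt15_general {n : ℕ} (S : Finset (Fin n × Fin n)) (hS : PairsClosed S)
    (α : Fin n → ℕ) (hαpos : ∀ i, 0 < α i)
    (hα : ∀ i j : Fin n, (j : ℕ) + 1 = (i : ℕ) → 2 * ((i : ℕ) + 1) * α j + 2 < α i)
    (b : ℕ → Matrix (Fin n) (Fin n) ℂ)
    (hut : ∀ m (i j : Fin n), j < i → b m i j = 0)
    (hz : ∀ m (i j : Fin n), i ∈ colS S j → i ≠ j → b m i j = 0)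
    (hconv : ∀ i : Fin n, ∃ L : ℂ,
      Tendsto (fun m => ∏ k ∈ Finset.Iic i, b m k k) atTop (𝓝 L))
    (s : Fin n) (hs : Tendsto (fun m => b m s s) atTop (𝓝 0))
    (C : ℕ → ℂ) (hC : ∀ m, C m = ∏ i : Fin n, (b m i i) ^ (n - (i : ℕ)))
    (q : (j : Fin n) → ExtP n (colS S j).card)
    (hq : ∀ j : Fin n,
      Tendsto (fun m => (C m) ^ (α j) • colWedge (colS S j).card (b m) (colS S j) rfl)
        atTop (𝓝 (q j))) :
    ∀ t : Fin n, q t ≠ 0 →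
      ∀ (D : Finset (Fin n)) (hD : D.card = (colS S t).card),
        (∃ i ∈ D, t ≤ i) → q t ⟨D, hD⟩ = 0 := by
  intro t _ D hD ⟨r, hrD, htr⟩
  have hupper (m : ℕ) : (b m).IsUpperTriangular := fun i j h => hut m i j h
  have hP (i : Fin n) : (fun m => ∏ k ∈ Iic i, b m k k) =O[atTop] (fun _ => (1 : ℂ)) :=
    (hconv i).choose_spec.isBigO_one ℂ
  have hCd := prod_pow_sub_isBigO_diag (d := fun m i => b m i i) hP hC
  have hC0 : Tendsto C atTop (𝓝 0) := (hCd s).trans_tendsto hs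
  have hminor (j : Fin n) (R : SubK n (colS S j).card) :
      (fun m => C m ^ α j * gminor _ (b m) R ⟨colS S j, rfl⟩) =O[atTop] (fun _ => (1 : ℂ)) :=
    ((tendsto_pi_nhds.1 (hq j) R).isBigO_one ℂ).congr_left fun m => by simp [colWedge_apply]
  have hdiag := prod_pow_sub_pow_mul_diag_isBigO_one (d := fun m i => b m i i) hP hC
  have hentry := pow_mul_entry_isBigO_one hS.1 hupper hz hC0 hCd hdiag hminor
  have hcoord := pow_mul_gminor_colS_isBigO hS.1 hupper hC0 hdiag hentry
    (sum_Iio_add_val_lt hαpos hα t) ⟨D, hD⟩ hrD htr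
  refine tendsto_nhds_unique (tendsto_pi_nhds.1 (hq t) ⟨D, hD⟩) ?_
  simpa [colWedge_apply] using hcoord.trans_tendsto hC0

/-- Let `S` be closed and `α ∈ (ℤ_{>0})^n` with
`α_i > 2iα_{i−1} + 2` for `i = 2,…,n` (in `0`-based terms: `α_i > 2(i+1)α_j + 2`
whenever `j+1 = i`). Let `(b^{(m)})` be a sequence of upper triangular matrices in
`SL_n(ℂ)` with `b^{(m)}_{ij} = 0` for `i ∈ S_j`, `i ≠ j`; assume each partial diagonal
product converges, some diagonal entry tends to `0`, and for each `j` the limit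
`q_j^∞ = lim_m 𝒞_m^{α_j} · ⋀_{i∈S_j}(b^{(m)} e_i)` exists, where
`𝒞_m = (b^{(m)}_{11})^n ⋯ (b^{(m)}_{nn})^1`. Then, for every `t` with `q_t^∞ ≠ 0`,
`q_t^∞ ∈ Λ^{|S_t|}(span(e_1,…,e_{t−1}))`: the coordinate of `q_t^∞` on every standard
basis wedge `⋀_{i∈C} e_i` with `C` containing an index `≥ t` vanishes. -/
theorem stmt15 {n : ℕ} (hn : 1 ≤ n) (S : Finset (Fin n × Fin n)) (hS : PairsClosed S)
    (α : Fin n → ℕ) (hαpos : ∀ i, 0 < α i)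
    (hα : ∀ i j : Fin n, (j : ℕ) + 1 = (i : ℕ) → 2 * ((i : ℕ) + 1) * α j + 2 < α i)
    (b : ℕ → Matrix (Fin n) (Fin n) ℂ)
    (hdet : ∀ m, (b m).det = 1)
    (hut : ∀ m (i j : Fin n), j < i → b m i j = 0)
    (hz : ∀ m (i j : Fin n), i ∈ colS S j → i ≠ j → b m i j = 0)
    (hconv : ∀ i : Fin n, ∃ L : ℂ,
      Tendsto (fun m => ∏ k ∈ Finset.Iic i, b m k k) atTop (𝓝 L))
    (s : Fin n) (hs : Tendsto (fun m => b m s s) atTop (𝓝 0))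
    (C : ℕ → ℂ) (hC : ∀ m, C m = ∏ i : Fin n, (b m i i) ^ (n - (i : ℕ)))
    (q : (j : Fin n) → ExtP n (colS S j).card)
    (hq : ∀ j : Fin n,
      Tendsto (fun m => (C m) ^ (α j) • colWedge (colS S j).card (b m) (colS S j) rfl)
        atTop (𝓝 (q j))) :
    ∀ t : Fin n, q t ≠ 0 →
      ∀ (D : Finset (Fin n)) (hD : D.card = (colS S t).card),
        (∃ i ∈ D, t ≤ i) → q t ⟨D, hD⟩ = 0 :=
  stmt15_general S hS α hαpos hα b hut hz hconv s hs C hC q hq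

end
end
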